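/- arXiv:2108.12942 — 3 statements merged into one kernel-verified Lean document; each statement's English description precedes it below -/
import Mathlib

section
/- Let a : ℝ → ℝ be continuous, 1-periodic, with 0 < α ≤ a(y) ≤ β for all y. Then as ε → 0 along the sequence ε = 1/n, the functions x ↦ 1/a(x/ε) converge weakly in L²(0,1) to the constant ∫₀¹ 1/a(y) dy; equivalently, for every continuous g on [0,1], ∫₀¹ g(x)/a(x/ε) dx → (∫₀¹ 1/a(y) dy)(∫₀¹ g(x) dx). -/
/-!
Cut `[0, 1]` into the cells `[k/n, (k+1)/n]`. On each cell `x ↦ f (n x) - ⨍ f` runs through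
exactly one period, so it has mean zero and `g` may be replaced there by `g - g (k/n)`, which is
at most `ω_g (1/n)` in absolute value. Summing over the cells bounds the error by
`ω_g (1/n) * ∫₀¹ |f - ⨍ f|`, which tends to zero by uniform continuity of `g`.
-/

open Filter MeasureTheory intervalIntegral Set Topology

namespace Function.Periodic

variable {E : Type*} [NormedAddCommGroup E] {h : ℝ → E}

theorem intervalIntegrable_comp_mul_right (hh : Periodic h 1)
    (hint : IntervalIntegrable h volume 0 1) {c : ℝ} (hc : c ≠ 0) (u v : ℝ) :
    IntervalIntegrable (fun x => h (x * c)) volume u v := by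
  simpa [mul_div_cancel_right₀ _ hc] using
    (hh.intervalIntegrable₀ one_ne_zero hint (u * c) (v * c)).comp_mul_right (c := c)

variable [NormedSpace ℝ E]

theorem intervalIntegral_comp_mul_nat (hh : Periodic h 1)
    (hint : IntervalIntegrable h volume 0 1) {n : ℕ} (hn : n ≠ 0) :
    ∫ x in (0:ℝ)..1, h (x * n) = ∫ x in (0:ℝ)..1, h x := by
  have hn' : (n : ℝ) ≠ 0 := Nat.cast_ne_zero.mpr hn
  have := hh.intervalIntegral_add_zsmul_eq n 0 (hh.intervalIntegrable₀ one_ne_zero hint)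
  rw [zero_add, zero_add, zsmul_one, Int.cast_natCast, natCast_zsmul,
    ← Nat.cast_smul_eq_nsmul ℝ] at this
  rw [integral_comp_mul_right _ hn', zero_mul, one_mul, this, inv_smul_smul₀ hn']

theorem intervalIntegral_div_nat_comp_mul_nat (hh : Periodic h 1) {n : ℕ} (hn : n ≠ 0) (k : ℕ) :
    ∫ x in (k / n : ℝ)..(k + 1) / n, h (x * n) = (n : ℝ)⁻¹ • ∫ x in (0:ℝ)..1, h x := by
  have hn' : (n : ℝ) ≠ 0 := Nat.cast_ne_zero.mpr hn
  rw [integral_comp_mul_right _ hn', div_mul_cancel₀ _ hn', div_mul_cancel₀ _ hn',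
    hh.intervalIntegral_add_eq k 0, zero_add]

end Function.Periodic

theorem Icc_div_nat_subset_Icc {n k : ℕ} (hk : k < n) :
    Icc ((k : ℝ) / n) ((k + 1) / n) ⊆ Icc 0 1 := by
  have hn : (0 : ℝ) < n := by exact_mod_cast (k.zero_le.trans_lt hk)
  have hk' : (k : ℝ) + 1 ≤ n := by exact_mod_cast hk
  exact Icc_subset_Icc (by positivity) ((div_le_one hn).mpr hk')

variable {f g h : ℝ → ℝ}

theorem abs_integral_div_nat_mul_comp_mul_nat_le (hh : Function.Periodic h 1)
    (hint : IntervalIntegrable h volume 0 1) (hmean : ∫ x in (0:ℝ)..1, h x = 0)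
    (hg : ContinuousOn g (Icc 0 1)) {n k : ℕ} (hk : k < n) {η : ℝ}
    (hη : ∀ x ∈ Icc ((k : ℝ) / n) ((k + 1) / n), |g x - g (k / n)| ≤ η) :
    |∫ x in (k / n : ℝ)..(k + 1) / n, g x * h (x * n)|
      ≤ η * ∫ x in (k / n : ℝ)..(k + 1) / n, |h (x * n)| := by
  have hn : n ≠ 0 := (k.zero_le.trans_lt hk).ne'
  have hle : (k : ℝ) / n ≤ (k + 1) / n := by gcongr; linarith
  have hsub : uIcc ((k : ℝ) / n) ((k + 1) / n) ⊆ Icc 0 1 := by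
    rw [uIcc_of_le hle]; exact Icc_div_nat_subset_Icc hk
  have hH := hh.intervalIntegrable_comp_mul_right hint (Nat.cast_ne_zero.mpr hn)
    ((k : ℝ) / n) ((k + 1) / n)
  have hcentre : ∫ x in (k / n : ℝ)..(k + 1) / n, g x * h (x * n)
      = ∫ x in (k / n : ℝ)..(k + 1) / n, (g x - g (k / n)) * h (x * n) := by
    simp_rw [sub_mul]
    rw [intervalIntegral.integral_sub (hH.continuousOn_mul (hg.mono hsub)) (hH.const_mul _),
      intervalIntegral.integral_const_mul, hh.intervalIntegral_div_nat_comp_mul_nat hn, hmean,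
      smul_zero, mul_zero, sub_zero]
  calc |∫ x in (k / n : ℝ)..(k + 1) / n, g x * h (x * n)|
      ≤ ∫ x in (k / n : ℝ)..(k + 1) / n, |(g x - g (k / n)) * h (x * n)| :=
        hcentre ▸ abs_integral_le_integral_abs hle
    _ ≤ ∫ x in (k / n : ℝ)..(k + 1) / n, η * |h (x * n)| := by
        refine integral_mono_on hle
          (hH.continuousOn_mul ((hg.mono hsub).sub continuousOn_const)).abs (hH.abs.const_mul η)
          fun x hx => ?_
        rw [abs_mul]
        exact mul_le_mul_of_nonneg_right (hη x hx) (abs_nonneg _)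
    _ = η * ∫ x in (k / n : ℝ)..(k + 1) / n, |h (x * n)| :=
        intervalIntegral.integral_const_mul _ _

theorem abs_integral_mul_comp_mul_nat_le (hh : Function.Periodic h 1)
    (hint : IntervalIntegrable h volume 0 1) (hmean : ∫ x in (0:ℝ)..1, h x = 0)
    (hg : ContinuousOn g (Icc 0 1)) {n : ℕ} (hn : n ≠ 0) {η : ℝ}
    (hη : ∀ x ∈ Icc (0:ℝ) 1, ∀ y ∈ Icc (0:ℝ) 1, |x - y| ≤ (n : ℝ)⁻¹ → |g x - g y| ≤ η) :
    |∫ x in (0:ℝ)..1, g x * h (x * n)| ≤ η * ∫ x in (0:ℝ)..1, |h x| := by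
  have hn' : (n : ℝ) ≠ 0 := Nat.cast_ne_zero.mpr hn
  have hH := hh.intervalIntegrable_comp_mul_right hint hn'
  have hsplit : ∀ φ : ℝ → ℝ, IntervalIntegrable φ volume 0 1 →
      ∑ k ∈ Finset.range n, ∫ x in (k / n : ℝ)..(k + 1) / n, φ x = ∫ x in (0:ℝ)..1, φ x := by
    intro φ hφ
    have := sum_integral_adjacent_intervals (f := φ) (μ := volume)
      (a := fun k : ℕ => (k : ℝ) / n) (n := n) fun k hk => hφ.mono_set ?_
    · simpa [div_self hn'] using this
    · rw [uIcc_of_le zero_le_one, uIcc_of_le (by gcongr; simp)]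
      simpa using Icc_div_nat_subset_Icc hk
  have hpiece : ∀ k ∈ Finset.range n, |∫ x in (k / n : ℝ)..(k + 1) / n, g x * h (x * n)|
      ≤ η * ∫ x in (k / n : ℝ)..(k + 1) / n, |h (x * n)| := by
    intro k hk
    have hk := Finset.mem_range.mp hk
    refine abs_integral_div_nat_mul_comp_mul_nat_le hh hint hmean hg hk fun x hx => ?_
    have hkx : x - k / n ≤ (n : ℝ)⁻¹ := by
      have : ((k : ℝ) + 1) / n - k / n = (n : ℝ)⁻¹ := by field_simp; ring
      linarith [hx.2]
    refine hη x (Icc_div_nat_subset_Icc hk hx) _ (Icc_div_nat_subset_Icc hk ⟨le_rfl, ?_⟩) ?_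
    · gcongr; linarith
    · rw [abs_of_nonneg (by linarith [hx.1])]; exact hkx
  calc |∫ x in (0:ℝ)..1, g x * h (x * n)|
      = |∑ k ∈ Finset.range n, ∫ x in (k / n : ℝ)..(k + 1) / n, g x * h (x * n)| := by
        rw [hsplit _ ((hH 0 1).continuousOn_mul (by rwa [uIcc_of_le zero_le_one]))]
    _ ≤ ∑ k ∈ Finset.range n, η * ∫ x in (k / n : ℝ)..(k + 1) / n, |h (x * n)| :=
        (Finset.abs_sum_le_sum_abs _ _).trans (Finset.sum_le_sum hpiece)
    _ = η * ∫ x in (0:ℝ)..1, |h x| := by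
        rw [← Finset.mul_sum, hsplit _ (hH 0 1).abs,
          (hh.comp (|·|)).intervalIntegral_comp_mul_nat (h := fun x => |h x|) hint.abs hn]

theorem tendsto_integral_mul_comp_mul_nat_of_integral_eq_zero (hh : Function.Periodic h 1)
    (hint : IntervalIntegrable h volume 0 1) (hmean : ∫ x in (0:ℝ)..1, h x = 0)
    (hg : ContinuousOn g (Icc 0 1)) :
    Tendsto (fun n : ℕ => ∫ x in (0:ℝ)..1, g x * h (x * n)) atTop (𝓝 0) := by
  rw [Metric.tendsto_atTop]
  intro ε hε
  set I := ∫ x in (0:ℝ)..1, |h x|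
  have hI : 0 ≤ I := integral_nonneg zero_le_one fun x _ => abs_nonneg (h x)
  obtain ⟨δ, hδ, hgδ⟩ := Metric.uniformContinuousOn_iff_le.mp
    (isCompact_Icc.uniformContinuousOn_of_continuous hg) (ε / (I + 1)) (by positivity)
  obtain ⟨N, hN⟩ := exists_nat_gt δ⁻¹
  refine ⟨N, fun n hn => ?_⟩
  have hn_pos : (0 : ℝ) < n := (inv_pos.mpr hδ).trans (hN.trans_le (by exact_mod_cast hn))
  have hnδ : (n : ℝ)⁻¹ ≤ δ := inv_le_of_inv_le₀ hδ (hN.le.trans (by exact_mod_cast hn))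
  rw [Real.dist_eq, sub_zero]
  calc |∫ x in (0:ℝ)..1, g x * h (x * n)| ≤ ε / (I + 1) * I :=
        abs_integral_mul_comp_mul_nat_le hh hint hmean hg (by exact_mod_cast hn_pos.ne')
          fun x hx y hy hxy => hgδ x hx y hy (hxy.trans hnδ)
    _ < ε := by
        rw [div_mul_eq_mul_div, div_lt_iff₀ (by positivity)]
        nlinarith

theorem tendsto_integral_mul_comp_mul_nat (hf : Function.Periodic f 1)
    (hint : IntervalIntegrable f volume 0 1) (hg : ContinuousOn g (Icc 0 1)) :
    Tendsto (fun n : ℕ => ∫ x in (0:ℝ)..1, g x * f (x * n)) atTop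
      (𝓝 ((∫ y in (0:ℝ)..1, f y) * ∫ x in (0:ℝ)..1, g x)) := by
  set M := ∫ y in (0:ℝ)..1, f y
  have hh : Function.Periodic (fun y => f y - M) 1 := fun y => by simp only [hf y]
  have hhint : IntervalIntegrable (fun y => f y - M) volume 0 1 :=
    hint.sub intervalIntegrable_const
  have hmean : ∫ y in (0:ℝ)..1, (f y - M) = 0 := by
    simp [intervalIntegral.integral_sub hint intervalIntegrable_const, M]
  have hdecomp : ∀ n : ℕ, n ≠ 0 → ∫ x in (0:ℝ)..1, g x * f (x * n)
      = (∫ x in (0:ℝ)..1, g x * (f (x * n) - M)) + M * ∫ x in (0:ℝ)..1, g x := by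
    intro n hn
    have hH := hh.intervalIntegrable_comp_mul_right hhint (Nat.cast_ne_zero.mpr hn) 0 1
    rw [← intervalIntegral.integral_const_mul, ← intervalIntegral.integral_add
      (hH.continuousOn_mul (by rwa [uIcc_of_le zero_le_one]))
      ((hg.intervalIntegrable_of_Icc zero_le_one).const_mul M)]
    exact integral_congr fun x _ => by ring
  have hlim := (tendsto_integral_mul_comp_mul_nat_of_integral_eq_zero hh hhint hmean hg).add_const
    (M * ∫ x in (0:ℝ)..1, g x)
  rw [zero_add] at hlim
  exact hlim.congr' ((eventually_ne_atTop 0).mono fun n hn => (hdecomp n hn).symm)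

theorem weak_convergence_oscillating_inverse
    (a : ℝ → ℝ) (ha_cont : Continuous a) (ha_per : Function.Periodic a 1)
    (α β : ℝ) (hα : 0 < α) (hab : ∀ y, α ≤ a y ∧ a y ≤ β)
    (g : ℝ → ℝ) (hg : ContinuousOn g (Set.Icc 0 1)) :
    Tendsto (fun n : ℕ => ∫ x in (0:ℝ)..1, g x / a (x * n)) atTop
      (nhds ((∫ y in (0:ℝ)..1, (a y)⁻¹) * ∫ x in (0:ℝ)..1, g x)) := by
  have ha_ne : ∀ y, a y ≠ 0 := fun y => (hα.trans_le (hab y).1).ne'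
  have hper : Function.Periodic (fun y => (a y)⁻¹) 1 := fun y => by simp only [ha_per y]
  simp_rw [div_eq_mul_inv]
  exact tendsto_integral_mul_comp_mul_nat hper ((ha_cont.inv₀ ha_ne).intervalIntegrable 0 1) hg
end

section
/- Under the hypotheses of 1D homogenization with ε = 1/n, the solutions u_ε of -(a(x/ε) u_ε')' = f on (0,1) with u_ε(0)=u_ε(1)=0 converge uniformly on [0,1] (hence in L²) to the solution u₀ of -(a* u₀')' = f with the same boundary conditions, where a* = (∫₀¹ 1/a(y) dy)⁻¹ is the harmonic mean of a. -/
/-!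
Integrating the equation once gives `a (n t) * u_n' t = c_n - F t` with `F' = f`, so
`u_n = c_n * W_n - J_n` where `W_n x = ∫₀ˣ (a (n t))⁻¹` and `J_n x = ∫₀ˣ F t * (a (n t))⁻¹`, and
`u_n 1 = 0` forces `c_n = J_n 1 / W_n 1`; `u₀` has the same form with the weight `(a (n ·))⁻¹`
replaced by its mean `m = ∫₀¹ a⁻¹`. Since `x ↦ ∫₀ˣ a⁻¹ - m x` is periodic, hence bounded,
`W_n x = m x + O(1/n)` uniformly; integrating by parts against `F` transfers this to `J_n`, and
the representation is continuous in `(W_n, J_n)` for uniform convergence.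
-/

open Filter Topology MeasureTheory intervalIntegral Set

variable {ι : Type*} {l : Filter ι}

theorem Function.Periodic.exists_abs_integral_sub_mul_le {ρ : ℝ → ℝ} (hρ : Continuous ρ)
    (hper : ρ.Periodic 1) : ∃ M, ∀ x, |(∫ t in 0..x, ρ t) - x * ∫ t in 0..1, ρ t| ≤ M := by
  have hper' : Function.Periodic (fun x => (∫ t in 0..x, ρ t) - x * ∫ t in 0..1, ρ t) 1 := by
    intro x
    simp only [hper.intervalIntegral_add_eq_add 0 x (hρ.intervalIntegrable · ·), zero_add]
    ring
  have hcont : Continuous fun x => (∫ t in 0..x, ρ t) - x * ∫ t in 0..1, ρ t :=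
    (continuous_primitive (hρ.intervalIntegrable · ·) 0).sub (by fun_prop)
  obtain ⟨M, hM⟩ :=
    isBounded_iff_forall_norm_le.1 (hper'.isBounded_of_continuous one_ne_zero hcont)
  exact ⟨M, fun x => hM _ (mem_range_self x)⟩

theorem Function.Periodic.tendstoUniformly_integral_comp_mul {ρ : ℝ → ℝ} (hρ : Continuous ρ)
    (hper : ρ.Periodic 1) :
    TendstoUniformly (fun (n : ℕ) x => ∫ t in 0..x, ρ (t * n))
      (fun x => ∫ _ in 0..x, ∫ s in 0..1, ρ s) atTop := by
  obtain ⟨M, hM⟩ := hper.exists_abs_integral_sub_mul_le hρ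
  have hrate : ∀ n : ℕ, 0 < n → ∀ x,
      |(∫ _ in 0..x, ∫ s in 0..1, ρ s) - ∫ t in 0..x, ρ (t * n)| ≤ M / n := by
    intro n hn x
    have hn' : (0 : ℝ) < n := Nat.cast_pos.2 hn
    have hscale : (∫ t in 0..x, ρ (t * n)) - ∫ _ in 0..x, ∫ s in 0..1, ρ s
        = ((∫ t in 0..x * n, ρ t) - x * n * ∫ s in 0..1, ρ s) / n := by
      rw [integral_comp_mul_right _ hn'.ne', zero_mul, intervalIntegral.integral_const,
        smul_eq_mul, smul_eq_mul]
      field_simp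
      ring
    rw [abs_sub_comm, hscale, abs_div, abs_of_pos hn']
    exact div_le_div_of_nonneg_right (hM _) hn'.le
  rw [Metric.tendstoUniformly_iff]
  intro ε hε
  filter_upwards [(tendsto_const_div_atTop_nhds_zero_nat M).eventually (gt_mem_nhds hε),
    eventually_gt_atTop 0] with n hMn hn x
  exact (hrate n hn x).trans_lt hMn

theorem abs_integral_mul_deriv_le {u u' v v' : ℝ → ℝ} {a b C δ : ℝ} (hab : a ≤ b)
    (hu : ∀ x ∈ Icc a b, HasDerivAt u (u' x) x) (hv : ∀ x ∈ Icc a b, HasDerivAt v (v' x) x)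
    (hu' : IntervalIntegrable u' volume a b) (hv' : IntervalIntegrable v' volume a b)
    (huC : ∀ x ∈ Icc a b, |u x| ≤ C) (hu'C : ∀ x ∈ Icc a b, |u' x| ≤ C)
    (hvδ : ∀ x ∈ Icc a b, |v x| ≤ δ) :
    |∫ x in a..b, u x * v' x| ≤ C * δ * (2 + (b - a)) := by
  have hprod : ∀ w : ℝ → ℝ, (∀ x ∈ Icc a b, |w x| ≤ C) → ∀ x ∈ Icc a b, |w x * v x| ≤ C * δ :=
    fun w hw x hx => by
      rw [abs_mul]
      exact mul_le_mul (hw x hx) (hvδ x hx) (abs_nonneg _) ((abs_nonneg _).trans (huC x hx))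
  have hrest : |∫ x in a..b, u' x * v x| ≤ C * δ * (b - a) := by
    have := norm_integral_le_of_norm_le_const (a := a) (b := b) (f := fun x => u' x * v x)
      (C := C * δ) fun x hx => by
        rw [uIoc_of_le hab] at hx
        exact hprod u' hu'C x (Ioc_subset_Icc_self hx)
    rwa [Real.norm_eq_abs, abs_of_nonneg (sub_nonneg.2 hab)] at this
  rw [integral_mul_deriv_eq_deriv_mul (by rwa [uIcc_of_le hab]) (by rwa [uIcc_of_le hab]) hu' hv']
  have ha := hprod u huC a (left_mem_Icc.2 hab)
  have hb := hprod u huC b (right_mem_Icc.2 hab)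
  calc |u b * v b - u a * v a - ∫ x in a..b, u' x * v x|
      ≤ |u b * v b| + |u a * v a| + |∫ x in a..b, u' x * v x| :=
        (abs_sub _ _).trans (add_le_add_left (abs_sub _ _) _)
    _ ≤ C * δ * (2 + (b - a)) := by linarith

theorem tendstoUniformlyOn_integral_mul {w : ι → ℝ → ℝ} {w₀ F f : ℝ → ℝ}
    (hF : ∀ t, HasDerivAt F (f t) t) (hf : Continuous f)
    (hw : ∀ i, Continuous (w i)) (hw₀ : Continuous w₀)
    (hW : TendstoUniformlyOn (fun i x => ∫ t in 0..x, w i t) (fun x => ∫ t in 0..x, w₀ t) l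
      (Icc 0 1)) :
    TendstoUniformlyOn (fun i x => ∫ t in 0..x, F t * w i t)
      (fun x => ∫ t in 0..x, F t * w₀ t) l (Icc 0 1) := by
  have hFc : Continuous F := continuous_iff_continuousAt.2 fun t => (hF t).continuousAt
  obtain ⟨C₁, hC₁⟩ :=
    (isCompact_Icc (a := (0 : ℝ)) (b := 1)).exists_bound_of_continuousOn hFc.continuousOn
  obtain ⟨C₂, hC₂⟩ :=
    (isCompact_Icc (a := (0 : ℝ)) (b := 1)).exists_bound_of_continuousOn hf.continuousOn
  set C := max C₁ C₂
  have hC0 : 0 ≤ C := (norm_nonneg _).trans ((hC₁ 0 (by norm_num)).trans (le_max_left _ _))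
  rw [Metric.tendstoUniformlyOn_iff] at hW ⊢
  intro ε hε
  have hδ : 0 < ε / (3 * C + 1) := by positivity
  filter_upwards [hW _ hδ] with i hi x hx
  have hsub : Icc 0 x ⊆ Icc (0 : ℝ) 1 := Icc_subset_Icc_right hx.2
  have hFw : ∀ g : ℝ → ℝ, Continuous g → IntervalIntegrable (fun t => F t * g t) volume 0 x :=
    fun g hg => (hFc.mul hg).intervalIntegrable _ _
  have hibp := abs_integral_mul_deriv_le hx.1 (fun t _ => hF t)
    (v := fun x => (∫ t in 0..x, w₀ t) - ∫ t in 0..x, w i t)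
    (fun t _ => (hw₀.integral_hasStrictDerivAt 0 t).hasDerivAt.sub
      ((hw i).integral_hasStrictDerivAt 0 t).hasDerivAt)
    (hf.intervalIntegrable _ _) ((hw₀.sub (hw i)).intervalIntegrable _ _)
    (fun t ht => (hC₁ t (hsub ht)).trans (le_max_left _ _))
    (fun t ht => (hC₂ t (hsub ht)).trans (le_max_right _ _))
    (fun t ht => (hi t (hsub ht)).le)
  rw [Real.dist_eq, ← integral_sub (hFw _ hw₀) (hFw _ (hw i))]
  simp only [← mul_sub]
  calc _ ≤ C * (ε / (3 * C + 1)) * (2 + (x - 0)) := hibp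
    _ ≤ C * (ε / (3 * C + 1)) * 3 := by gcongr; linarith [hx.2]
    _ < ε := by
      rw [mul_comm C, mul_assoc, div_mul_eq_mul_div, mul_comm C, div_lt_iff₀ (by positivity)]
      nlinarith

/-- The solution of `-(k v')' = f` on `[0, 1]` with `v 0 = v 1 = 0`, written in terms of the
weight `w = 1 / k` and a primitive `F` of `f`. -/
noncomputable def dirichletSolution (w F : ℝ → ℝ) (x : ℝ) : ℝ :=
  (∫ t in 0..1, F t * w t) / (∫ t in 0..1, w t) * (∫ t in 0..x, w t) - ∫ t in 0..x, F t * w t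

theorem exists_flux_eq_const {k f v : ℝ → ℝ} (hf : Continuous f)
    (hode : ∀ x ∈ Ioo (0 : ℝ) 1, HasDerivAt (fun t => k t * deriv v t) (-f x) x) :
    ∃ c, ∀ x ∈ Ioo (0 : ℝ) 1, k x * deriv v x + ∫ t in 0..x, f t = c := by
  have hflux : ∀ x ∈ Ioo (0 : ℝ) 1,
      HasDerivAt (fun x => k x * deriv v x + ∫ t in 0..x, f t) 0 x := fun x hx =>
    ((hode x hx).add (hf.integral_hasStrictDerivAt 0 x).hasDerivAt).congr_deriv
      (neg_add_cancel _)
  exact isOpen_Ioo.exists_is_const_of_deriv_eq_zero isPreconnected_Ioo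
    (fun x hx => (hflux x hx).differentiableAt.differentiableWithinAt)
    (fun x hx => (hflux x hx).deriv)

theorem eqOn_dirichletSolution {k f v : ℝ → ℝ} (hk : Continuous k) (hk_pos : ∀ t, 0 < k t)
    (hf : Continuous f) (hv : ContinuousOn v (Icc 0 1)) (hv' : DifferentiableOn ℝ v (Ioo 0 1))
    (hode : ∀ x ∈ Ioo (0 : ℝ) 1, HasDerivAt (fun t => k t * deriv v t) (-f x) x)
    (hv0 : v 0 = 0) (hv1 : v 1 = 0) :
    EqOn v (dirichletSolution (fun t => (k t)⁻¹) fun x => ∫ t in 0..x, f t) (Icc 0 1) := by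
  obtain ⟨c, hc⟩ := exists_flux_eq_const hf hode
  set F : ℝ → ℝ := fun x => ∫ t in 0..x, f t
  have hw : Continuous fun t => (k t)⁻¹ := hk.inv₀ fun t => (hk_pos t).ne'
  have hcw : Continuous fun t => c * (k t)⁻¹ := continuous_const.mul hw
  have hFw : Continuous fun t => F t * (k t)⁻¹ :=
    (continuous_primitive (hf.intervalIntegrable · ·) 0).mul hw
  have hrepr : ∀ x ∈ Icc (0 : ℝ) 1,
      v x = c * (∫ t in 0..x, (k t)⁻¹) - ∫ t in 0..x, F t * (k t)⁻¹ := by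
    intro x hx
    have hderiv : ∀ t ∈ Ioo 0 x, HasDerivAt v (c * (k t)⁻¹ - F t * (k t)⁻¹) t := by
      intro t ht
      have ht' : t ∈ Ioo (0 : ℝ) 1 := ⟨ht.1, ht.2.trans_le hx.2⟩
      have hvt : deriv v t = c * (k t)⁻¹ - F t * (k t)⁻¹ := by
        rw [← sub_mul, ← hc t ht', add_sub_cancel_right, mul_comm,
          inv_mul_cancel_left₀ (hk_pos t).ne']
      exact hvt ▸ (hv'.differentiableAt (isOpen_Ioo.mem_nhds ht')).hasDerivAt
    rw [← intervalIntegral.integral_const_mul, ← integral_sub (hcw.intervalIntegrable _ _)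
      (hFw.intervalIntegrable _ _), integral_eq_sub_of_hasDeriv_right_of_le hx.1
      (hv.mono (Icc_subset_Icc_right hx.2)) (fun t ht => (hderiv t ht).hasDerivWithinAt)
      ((hcw.sub hFw).intervalIntegrable _ _), hv0, sub_zero]
  have hW1 : 0 < ∫ t in 0..1, (k t)⁻¹ :=
    intervalIntegral_pos_of_pos_on (hw.intervalIntegrable _ _)
      (fun t _ => inv_pos.2 (hk_pos t)) zero_lt_one
  have hc1 : c = (∫ t in 0..1, F t * (k t)⁻¹) / ∫ t in 0..1, (k t)⁻¹ := by
    rw [eq_div_iff hW1.ne']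
    linarith [hrepr 1 (right_mem_Icc.2 zero_le_one)]
  intro x hx
  rw [hrepr x hx, hc1]
  rfl

theorem TendstoUniformlyOn.mul_tendsto {α : Type*} {s : Set α} {c : ι → ℝ} {c₀ : ℝ}
    {g : ι → α → ℝ} {g₀ : α → ℝ} {B : ℝ} (hg : TendstoUniformlyOn g g₀ l s)
    (hc : Tendsto c l (𝓝 c₀)) (hB : ∀ x ∈ s, |g₀ x| ≤ B) :
    TendstoUniformlyOn (fun i x => c i * g i x) (fun x => c₀ * g₀ x) l s := by
  rw [Metric.tendstoUniformlyOn_iff] at hg ⊢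
  intro ε hε
  set δ := min 1 (ε / (|B| + |c₀| + 2))
  have hδ : 0 < δ := lt_min one_pos (by positivity)
  have hδε : δ * (|B| + |c₀| + 1) < ε := by
    calc δ * (|B| + |c₀| + 1) < δ * (|B| + |c₀| + 2) := by gcongr; linarith
      _ ≤ ε / (|B| + |c₀| + 2) * (|B| + |c₀| + 2) := by gcongr; exact min_le_right _ _
      _ = ε := div_mul_cancel₀ _ (by positivity)
  filter_upwards [hg δ hδ, Metric.tendsto_nhds.1 hc δ hδ] with i hgi hci x hx
  have hci' : |c₀ - c i| < δ := by rw [abs_sub_comm]; exact hci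
  have hgi' : |g₀ x - g i x| < δ := hgi x hx
  have hgx : |g₀ x| ≤ |B| := (hB x hx).trans (le_abs_self B)
  have hcb : |c i| ≤ |c₀| + 1 := by
    have := abs_sub_abs_le_abs_sub (c i) c₀
    linarith [min_le_left 1 (ε / (|B| + |c₀| + 2)), abs_sub_comm (c i) c₀]
  rw [Real.dist_eq]
  calc |c₀ * g₀ x - c i * g i x| = |(c₀ - c i) * g₀ x + c i * (g₀ x - g i x)| := by ring_nf
    _ ≤ |c₀ - c i| * |g₀ x| + |c i| * |g₀ x - g i x| := by
      rw [← abs_mul, ← abs_mul]; exact abs_add_le _ _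
    _ ≤ δ * |B| + (|c₀| + 1) * δ := by gcongr
    _ = δ * (|B| + |c₀| + 1) := by ring
    _ < ε := hδε

theorem tendstoUniformlyOn_dirichletSolution {w : ι → ℝ → ℝ} {w₀ F : ℝ → ℝ} {B : ℝ}
    (hW : TendstoUniformlyOn (fun i x => ∫ t in 0..x, w i t) (fun x => ∫ t in 0..x, w₀ t) l
      (Icc 0 1))
    (hJ : TendstoUniformlyOn (fun i x => ∫ t in 0..x, F t * w i t)
      (fun x => ∫ t in 0..x, F t * w₀ t) l (Icc 0 1))
    (hW1 : ∫ t in 0..1, w₀ t ≠ 0) (hB : ∀ x ∈ Icc (0 : ℝ) 1, |∫ t in 0..x, w₀ t| ≤ B) :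
    TendstoUniformlyOn (fun i => dirichletSolution (w i) F) (dirichletSolution w₀ F) l
      (Icc 0 1) := by
  have h1 : (1 : ℝ) ∈ Icc 0 1 := right_mem_Icc.2 zero_le_one
  exact (hW.mul_tendsto ((hJ.tendsto_at h1).div (hW.tendsto_at h1) hW1) hB).sub hJ

theorem homogenization_1d_uniform_convergence
    (a : ℝ → ℝ) (ha_cont : Continuous a) (ha_per : Function.Periodic a 1)
    (α β : ℝ) (hα : 0 < α) (hab : ∀ y, α ≤ a y ∧ a y ≤ β)
    (f : ℝ → ℝ) (hf : ContinuousOn f (Set.Icc 0 1))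
    (u : ℕ → ℝ → ℝ) (u₀ : ℝ → ℝ)
    (hu_smooth : ∀ n, ContDiffOn ℝ 2 (u n) (Set.Icc 0 1))
    (hu0_smooth : ContDiffOn ℝ 2 u₀ (Set.Icc 0 1))
    (hode : ∀ n : ℕ, 0 < n → ∀ x ∈ Set.Ioo (0:ℝ) 1,
      HasDerivAt (fun t => a (t * n) * deriv (u n) t) (-f x) x)
    (hbc : ∀ n : ℕ, u n 0 = 0 ∧ u n 1 = 0)
    (hode0 : ∀ x ∈ Set.Ioo (0:ℝ) 1,
      HasDerivAt (fun t => (∫ y in (0:ℝ)..1, (a y)⁻¹)⁻¹ * deriv u₀ t) (-f x) x)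
    (hbc0 : u₀ 0 = 0 ∧ u₀ 1 = 0) :
    TendstoUniformlyOn u u₀ atTop (Set.Icc 0 1) := by
  -- `f` only matters on `[0, 1]`; extending it continuously makes its primitive `C¹` on `ℝ`.
  set g : ℝ → ℝ := fun x => f (projIcc 0 1 zero_le_one x)
  have hg : Continuous g :=
    hf.comp_continuous (continuous_subtype_val.comp continuous_projIcc) fun x => (projIcc 0 1 _ x).2
  have hfg : ∀ x ∈ Ioo (0 : ℝ) 1, f x = g x := fun x hx => by
    simp only [g, projIcc_of_mem _ (Ioo_subset_Icc_self hx)]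
  have ha_pos : ∀ y, 0 < a y := fun y => hα.trans_le (hab y).1
  have hρ : Continuous fun y => (a y)⁻¹ := ha_cont.inv₀ fun y => (ha_pos y).ne'
  set m := ∫ y in 0..1, (a y)⁻¹
  have hm : 0 < m := intervalIntegral_pos_of_pos_on (hρ.intervalIntegrable _ _)
    (fun y _ => inv_pos.2 (ha_pos y)) zero_lt_one
  have hW := ((ha_per.comp Inv.inv).tendstoUniformly_integral_comp_mul hρ).tendstoUniformlyOn
    (s := Icc 0 1)
  have hJ := tendstoUniformlyOn_integral_mul
    (fun t => (hg.integral_hasStrictDerivAt 0 t).hasDerivAt) hg (fun n => hρ.comp (continuous_mul_const _)) continuous_const hW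
  have hB : ∀ x ∈ Icc (0 : ℝ) 1, |∫ _ in 0..x, m| ≤ m := fun x hx => by
    rw [intervalIntegral.integral_const, smul_eq_mul, sub_zero, abs_of_nonneg (by nlinarith [hx.1])]
    nlinarith [hx.2]
  refine ((tendstoUniformlyOn_dirichletSolution hW hJ (by simpa using hm.ne') hB).congr ?_)
    |>.congr_right ?_
  · filter_upwards [eventually_gt_atTop 0] with n hn
    exact (eqOn_dirichletSolution (k := fun t => a (t * n)) (by fun_prop) (fun _ => ha_pos _) hg
      (hu_smooth n).continuousOn
      ((hu_smooth n).differentiableOn two_ne_zero |>.mono Ioo_subset_Icc_self)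
      (fun x hx => hfg x hx ▸ hode n hn x hx) (hbc n).1 (hbc n).2).symm
  · have h0 := eqOn_dirichletSolution (k := fun _ => m⁻¹) continuous_const
      (fun _ => inv_pos.2 hm) hg hu0_smooth.continuousOn
      (hu0_smooth.differentiableOn two_ne_zero |>.mono Ioo_subset_Icc_self)
      (fun x hx => hfg x hx ▸ hode0 x hx) hbc0.1 hbc0.2
    simp only [inv_inv] at h0
    exact h0.symm
end

section
/- Let a : ℝ → ℝ be continuous, 1-periodic, with 0 < α ≤ a ≤ β, and let f be continuous on [0,1]. Define u_ε as the solution of -(a(x/ε)u_ε')' = f with u_ε(0)=u_ε(1)=0 and u₀ as the solution with a replaced by the harmonic mean a*. Then there exists a constant C depending only on α, β, and ‖f‖_∞ such that sup_{x∈[0,1]} |u_ε(x) - u₀(x)| ≤ C ε for all ε = 1/n, n ∈ ℕ. -/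
/-!
Integrating the equation once, the flux `a(x/ε) u_ε'` equals `c_ε - F` with `F' = f`, so
`u_ε(x) = ∫₀ˣ (c_ε - F) w_ε` with the weight `w_ε = 1 / a(·/ε)`, and likewise
`u₀(x) = ∫₀ˣ (c₀ - F) w₀` with the constant weight `w₀ = ∫₀¹ 1/a`. By periodicity the primitive of
`w_ε - w₀` is `O(ε)`, so an integration by parts shows that swapping the weights changes such
integrals by `O(ε)`. The boundary condition at `1` then forces `c_ε - c₀ = O(ε)`, because
`∫₀¹ w_ε ≥ 1/β`.
-/

open Set intervalIntegral

theorem abs_integral_le_of_abs_le_on_Icc {h : ℝ → ℝ} {K x : ℝ} (hx : x ∈ Icc (0 : ℝ) 1)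
    (hK : ∀ t ∈ Icc (0 : ℝ) 1, |h t| ≤ K) : |∫ t in 0..x, h t| ≤ K :=
  calc |∫ t in 0..x, h t| ≤ K * |x - 0| :=
        norm_integral_le_of_norm_le_const (f := h) (C := K) fun t ht => by
          rw [uIoc_of_le hx.1] at ht
          exact hK t ⟨ht.1.le, ht.2.trans hx.2⟩
    _ ≤ K * 1 := by
        gcongr
        · exact (abs_nonneg _).trans (hK 0 ⟨le_rfl, zero_le_one⟩)
        · rw [sub_zero, abs_of_nonneg hx.1]; exact hx.2
    _ = K := mul_one K

theorem le_integral_of_forall_le {w : ℝ → ℝ} {B : ℝ} (hw : Continuous w) (hB : ∀ t, B ≤ w t) :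
    B ≤ ∫ t in 0..1, w t :=
  calc B = ∫ _ in (0 : ℝ)..1, B := by simp
    _ ≤ ∫ t in 0..1, w t :=
      integral_mono_on zero_le_one intervalIntegrable_const (hw.intervalIntegrable 0 1)
        fun t _ => hB t

theorem ContinuousOn.exists_bounded_antideriv_Icc {f : ℝ → ℝ} (hf : ContinuousOn f (Icc 0 1)) :
    ∃ F g : ℝ → ℝ, ∃ M, 0 < M ∧ Continuous g ∧ (∀ t, HasDerivAt F (g t) t) ∧
      EqOn g f (Icc 0 1) ∧ ∀ t ∈ Icc (0 : ℝ) 1, |F t| ≤ M ∧ |g t| ≤ M := by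
  obtain ⟨M, hM⟩ := isCompact_Icc.exists_bound_of_continuousOn hf
  set g := IccExtend zero_le_one ((Icc (0 : ℝ) 1).domRestrict f)
  have hgM : ∀ t, |g t| ≤ max M 1 := fun t => by
    simp only [g, IccExtend_apply]
    exact (hM _ (Subtype.property _)).trans (le_max_left M 1)
  have hg : Continuous g := continuous_IccExtend_iff.2 hf.domRestrict
  refine ⟨fun x => ∫ t in 0..x, g t, g, max M 1, by positivity, hg,
    fun t => (hg.integral_hasStrictDerivAt 0 t).hasDerivAt,
    fun x hx => IccExtend_of_mem zero_le_one _ hx, fun t ht => ⟨?_, hgM t⟩⟩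
  exact abs_integral_le_of_abs_le_on_Icc ht fun s _ => hgM s

namespace Function.Periodic

variable {p : ℝ → ℝ} {K : ℝ}

theorem abs_integral_sub_mul_integral_le (hp : Continuous p) (hper : Periodic p 1)
    (hK : ∀ y, |p y| ≤ K) (y : ℝ) :
    |(∫ t in 0..y, p t) - y * ∫ t in 0..1, p t| ≤ 2 * K := by
  set Φ : ℝ → ℝ := fun y => (∫ t in 0..y, p t) - y * ∫ t in 0..1, p t
  have hΦ : Periodic Φ 1 := fun y => by
    simp only [Φ, hper.intervalIntegral_add_eq_add 0 y fun _ _ => hp.intervalIntegrable _ _,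
      zero_add]
    ring
  have hint : ∀ x ∈ Icc (0 : ℝ) 1, |∫ t in 0..x, p t| ≤ K := fun x hx =>
    abs_integral_le_of_abs_le_on_Icc hx fun t _ => hK t
  obtain ⟨z, hz, hyz⟩ := hΦ.exists_mem_Ico₀ one_pos y
  have hz' : z ∈ Icc (0 : ℝ) 1 := Ico_subset_Icc_self hz
  calc |Φ y| = |Φ z| := by rw [hyz]
    _ ≤ |∫ t in 0..z, p t| + |z| * |∫ t in 0..1, p t| := by
      rw [← abs_mul]; exact abs_sub _ _
    _ ≤ K + 1 * K := by
      gcongr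
      · exact hint z hz'
      · rw [abs_of_nonneg hz'.1]; exact hz'.2
      · exact hint 1 ⟨zero_le_one, le_rfl⟩
    _ = 2 * K := by ring

theorem abs_integral_comp_mul_sub_le (hp : Continuous p) (hper : Periodic p 1)
    (hK : ∀ y, |p y| ≤ K) {n : ℝ} (hn : 0 < n) (x : ℝ) :
    |(∫ t in 0..x, p (t * n)) - x * ∫ t in 0..1, p t| ≤ 2 * K / n := by
  have hscale : (∫ t in 0..x, p (t * n)) - x * ∫ t in 0..1, p t
      = ((∫ t in 0..x * n, p t) - x * n * ∫ t in 0..1, p t) / n := by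
    rw [integral_comp_mul_right p hn.ne', smul_eq_mul, zero_mul]
    field_simp
  rw [hscale, abs_div, abs_of_pos hn]
  gcongr
  exact abs_integral_sub_mul_integral_le hp hper hK _

end Function.Periodic

theorem exists_eq_add_integral_of_hasDerivAt_flux {ρ u F f : ℝ → ℝ} (hρ : Continuous ρ)
    (hρ0 : ∀ t, ρ t ≠ 0) (hF : Continuous F) (hF' : ∀ x ∈ Ioo (0 : ℝ) 1, HasDerivAt F (f x) x)
    (hu : DifferentiableOn ℝ u (Icc 0 1))
    (hflux : ∀ x ∈ Ioo (0 : ℝ) 1, HasDerivAt (fun t => ρ t * deriv u t) (-f x) x) :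
    ∃ c, ∀ x ∈ Icc (0 : ℝ) 1, u x = u 0 + ∫ t in 0..x, (c - F t) / ρ t := by
  have hσF : ∀ x ∈ Ioo (0 : ℝ) 1, HasDerivAt (fun t => ρ t * deriv u t + F t) 0 x :=
    fun x hx => by simpa using (hflux x hx).fun_add (hF' x hx)
  obtain ⟨c, hc⟩ := isOpen_Ioo.exists_is_const_of_deriv_eq_zero isPreconnected_Ioo
    (fun x hx => (hσF x hx).differentiableAt.differentiableWithinAt)
    (fun x hx => (hσF x hx).deriv)
  refine ⟨c, fun x hx => ?_⟩
  have hu' : ∀ t ∈ Ioo (0 : ℝ) 1, HasDerivAt u ((c - F t) / ρ t) t := fun t ht => by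
    have hd := (hu.differentiableAt (Icc_mem_nhds ht.1 ht.2)).hasDerivAt
    rwa [← hc t ht, add_sub_cancel_right, mul_div_cancel_left₀ _ (hρ0 t)]
  rw [integral_eq_sub_of_hasDerivAt_of_le hx.1
    (hu.continuousOn.mono (Icc_subset_Icc_right hx.2))
    (fun t ht => hu' t ⟨ht.1, ht.2.trans_le hx.2⟩)
    (((continuous_const.sub hF).div hρ hρ0).intervalIntegrable 0 x)]
  ring

section Stability

variable {F g w : ℝ → ℝ} {w₀ c c₀ M E : ℝ}

theorem abs_integral_mul_sub_le (hF : ∀ t, HasDerivAt F (g t) t) (hg : Continuous g)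
    (hw : Continuous w) (hgM : ∀ t ∈ Icc (0 : ℝ) 1, |g t| ≤ M)
    (hE : ∀ t ∈ Icc (0 : ℝ) 1, |(∫ s in 0..t, w s) - t * w₀| ≤ E) {x : ℝ}
    (hx : x ∈ Icc (0 : ℝ) 1) :
    |∫ t in 0..x, F t * (w t - w₀)| ≤ (|F x| + M) * E := by
  set ψ : ℝ → ℝ := fun t => (∫ s in 0..t, w s) - t * w₀
  have hψ : ∀ t, HasDerivAt ψ (w t - w₀) t := fun t =>
    (hw.integral_hasStrictDerivAt 0 t).hasDerivAt.sub
      (by simpa using (hasDerivAt_id t).mul_const w₀)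
  rw [integral_mul_deriv_eq_deriv_mul (fun t _ => hF t) (fun t _ => hψ t)
    (hg.intervalIntegrable 0 x) ((hw.sub continuous_const).intervalIntegrable 0 x)]
  have hψ0 : ψ 0 = 0 := by simp [ψ]
  rw [hψ0, mul_zero, sub_zero]
  calc |F x * ψ x - ∫ t in 0..x, g t * ψ t| ≤ |F x| * |ψ x| + |∫ t in 0..x, g t * ψ t| := by
        rw [← abs_mul]; exact abs_sub _ _
    _ ≤ |F x| * E + M * E := by
        gcongr
        · exact hE x hx
        · refine abs_integral_le_of_abs_le_on_Icc hx fun t ht => ?_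
          rw [abs_mul]
          exact mul_le_mul (hgM t ht) (hE t ht) (abs_nonneg _) ((abs_nonneg _).trans (hgM t ht))
    _ = (|F x| + M) * E := by ring

theorem integral_sub_mul_sub_integral_sub_mul (hF : Continuous F) (hw : Continuous w) (x : ℝ) :
    (∫ t in 0..x, (c - F t) * w t) - ∫ t in 0..x, (c₀ - F t) * w₀
      = (c - c₀) * (∫ t in 0..x, w t) + ∫ t in 0..x, (c₀ - F t) * (w t - w₀) := by
  have hint : ∀ h : ℝ → ℝ, Continuous h → IntervalIntegrable h MeasureTheory.volume 0 x :=
    fun h hh => hh.intervalIntegrable 0 x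
  rw [← integral_const_mul, ← integral_sub (hint _ (by fun_prop)) (hint _ (by fun_prop)),
    ← integral_add (hint _ (by fun_prop)) (hint _ (by fun_prop))]
  congr 1 with t
  ring

theorem abs_le_of_integral_sub_mul_const_eq_zero (hF : Continuous F) (hw₀ : w₀ ≠ 0)
    (hFM : ∀ t ∈ Icc (0 : ℝ) 1, |F t| ≤ M) (hv₀ : ∫ t in 0..1, (c₀ - F t) * w₀ = 0) :
    |c₀| ≤ M := by
  rw [integral_mul_const, integral_sub intervalIntegrable_const (hF.intervalIntegrable 0 1),
    integral_const, sub_zero, one_smul, mul_eq_zero, sub_eq_zero] at hv₀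
  rw [hv₀.resolve_right hw₀]
  exact abs_integral_le_of_abs_le_on_Icc ⟨zero_le_one, le_rfl⟩ hFM

theorem abs_integral_sub_mul_sub_integral_sub_mul_le {A B : ℝ}
    (hF : ∀ t, HasDerivAt F (g t) t) (hg : Continuous g) (hw : Continuous w) (hw₀ : w₀ ≠ 0)
    (hFM : ∀ t ∈ Icc (0 : ℝ) 1, |F t| ≤ M) (hgM : ∀ t ∈ Icc (0 : ℝ) 1, |g t| ≤ M)
    (hwA : ∀ t, |w t| ≤ A) (hB : 0 < B) (hwB : ∀ t, B ≤ w t)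
    (hE : ∀ t ∈ Icc (0 : ℝ) 1, |(∫ s in 0..t, w s) - t * w₀| ≤ E)
    (hv : ∫ t in 0..1, (c - F t) * w t = 0) (hv₀ : ∫ t in 0..1, (c₀ - F t) * w₀ = 0)
    {x : ℝ} (hx : x ∈ Icc (0 : ℝ) 1) :
    |(∫ t in 0..x, (c - F t) * w t) - ∫ t in 0..x, (c₀ - F t) * w₀|
      ≤ 3 * M * E * (A / B + 1) := by
  have hFc : Continuous F := continuous_iff_continuousAt.2 fun t => (hF t).continuousAt
  have hc₀ : |c₀| ≤ M := abs_le_of_integral_sub_mul_const_eq_zero hFc hw₀ hFM hv₀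
  have hR : ∀ y ∈ Icc (0 : ℝ) 1, |∫ t in 0..y, (c₀ - F t) * (w t - w₀)| ≤ 3 * M * E := by
    intro y hy
    have hE0 : 0 ≤ E := (abs_nonneg _).trans (hE 0 ⟨le_rfl, zero_le_one⟩)
    calc _ ≤ (|c₀ - F y| + M) * E := abs_integral_mul_sub_le (fun t => (hF t).const_sub c₀)
            hg.neg hw (fun t ht => (abs_neg (g t)).trans_le (hgM t ht)) hE hy
      _ ≤ (M + M + M) * E := by
          gcongr
          exact (abs_sub _ _).trans (add_le_add hc₀ (hFM y hy))
      _ = 3 * M * E := by ring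
  have hc : |c - c₀| ≤ 3 * M * E / B := by
    have h1 := integral_sub_mul_sub_integral_sub_mul (c := c) (c₀ := c₀) (w₀ := w₀) hFc hw 1
    rw [hv, hv₀, sub_self, eq_comm, add_eq_zero_iff_eq_neg] at h1
    rw [le_div_iff₀ hB]
    have hW1 : B ≤ ∫ s in 0..1, w s := le_integral_of_forall_le hw hwB
    calc |c - c₀| * B ≤ |c - c₀| * ∫ s in 0..1, w s := by gcongr
      _ = |∫ t in 0..1, (c₀ - F t) * (w t - w₀)| := by
          rw [← abs_of_pos (hB.trans_le hW1), ← abs_mul, h1, abs_neg]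
      _ ≤ 3 * M * E := hR 1 ⟨zero_le_one, le_rfl⟩
  rw [integral_sub_mul_sub_integral_sub_mul hFc hw x]
  calc _ ≤ |c - c₀| * |∫ t in 0..x, w t| + |∫ t in 0..x, (c₀ - F t) * (w t - w₀)| := by
        rw [← abs_mul]; exact abs_add_le _ _
    _ ≤ 3 * M * E / B * A + 3 * M * E := by
        gcongr
        · exact (abs_nonneg _).trans hc
        · exact abs_integral_le_of_abs_le_on_Icc hx fun s _ => hwA s
        · exact hR x hx
    _ = 3 * M * E * (A / B + 1) := by ring

end Stability

theorem homogenization_rate_first_order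
    (a : ℝ → ℝ) (ha_cont : Continuous a) (ha_per : Function.Periodic a 1)
    (α β : ℝ) (hα : 0 < α) (hab : ∀ y, α ≤ a y ∧ a y ≤ β)
    (f : ℝ → ℝ) (hf : ContinuousOn f (Set.Icc 0 1))
    (u : ℕ → ℝ → ℝ) (u₀ : ℝ → ℝ)
    (hu_smooth : ∀ n, ContDiffOn ℝ 2 (u n) (Set.Icc 0 1))
    (hu0_smooth : ContDiffOn ℝ 2 u₀ (Set.Icc 0 1))
    (hode : ∀ n : ℕ, 0 < n → ∀ x ∈ Set.Ioo (0:ℝ) 1,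
      HasDerivAt (fun t => a (t * n) * deriv (u n) t) (-f x) x)
    (hbc : ∀ n : ℕ, u n 0 = 0 ∧ u n 1 = 0)
    (hode0 : ∀ x ∈ Set.Ioo (0:ℝ) 1,
      HasDerivAt (fun t => (∫ y in (0:ℝ)..1, (a y)⁻¹)⁻¹ * deriv u₀ t) (-f x) x)
    (hbc0 : u₀ 0 = 0 ∧ u₀ 1 = 0) :
    ∃ C : ℝ, 0 < C ∧ ∀ n : ℕ, 0 < n → ∀ x ∈ Set.Icc (0:ℝ) 1,
      |u n x - u₀ x| ≤ C * (1 / n) := by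
  have ha_pos : ∀ y, 0 < a y := fun y => hα.trans_le (hab y).1
  have hβ : 0 < β := hα.trans_le ((hab 0).1.trans (hab 0).2)
  have hinv : Continuous fun y => (a y)⁻¹ := ha_cont.inv₀ fun y => (ha_pos y).ne'
  have hinv_ge : ∀ y, β⁻¹ ≤ (a y)⁻¹ := fun y => inv_anti₀ (ha_pos y) (hab y).2
  have hinv_le : ∀ y, |(a y)⁻¹| ≤ α⁻¹ := fun y => by
    rw [abs_inv, abs_of_pos (ha_pos y)]; exact inv_anti₀ hα (hab y).1
  set Ia := ∫ y in (0 : ℝ)..1, (a y)⁻¹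
  have hIa : Ia ≠ 0 := ((inv_pos.2 hβ).trans_le (le_integral_of_forall_le hinv hinv_ge)).ne'
  obtain ⟨F, g, M, hM, hg, hF, hgf, hFgM⟩ := hf.exists_bounded_antideriv_Icc
  have hFc : Continuous F := continuous_iff_continuousAt.2 fun t => (hF t).continuousAt
  have hFf : ∀ x ∈ Ioo (0 : ℝ) 1, HasDerivAt F (f x) x := fun x hx =>
    hgf (Ioo_subset_Icc_self hx) ▸ hF x
  obtain ⟨c₀, hc₀⟩ := exists_eq_add_integral_of_hasDerivAt_flux (ρ := fun _ => Ia⁻¹)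
    continuous_const (fun _ => inv_ne_zero hIa) hFc hFf (hu0_smooth.differentiableOn two_ne_zero)
    hode0
  simp only [hbc0.1, zero_add, div_inv_eq_mul] at hc₀
  refine ⟨3 * M * (2 * α⁻¹) * (α⁻¹ / β⁻¹ + 1), by positivity, fun n hn x hx => ?_⟩
  have hw : Continuous fun t => (a (t * n))⁻¹ := hinv.comp (by fun_prop)
  obtain ⟨c, hc⟩ := exists_eq_add_integral_of_hasDerivAt_flux (ρ := fun t => a (t * n))
    (by fun_prop) (fun t => (ha_pos _).ne') hFc hFf ((hu_smooth n).differentiableOn two_ne_zero)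
    (hode n hn)
  simp only [(hbc n).1, zero_add, div_eq_mul_inv] at hc
  rw [hc x hx, hc₀ x hx]
  calc _ ≤ 3 * M * (2 * α⁻¹ / n) * (α⁻¹ / β⁻¹ + 1) :=
        abs_integral_sub_mul_sub_integral_sub_mul_le hF hg hw hIa (fun t ht => (hFgM t ht).1)
          (fun t ht => (hFgM t ht).2) (fun t => hinv_le _) (inv_pos.2 hβ) (fun t => hinv_ge _)
          (fun t _ => (ha_per.comp Inv.inv).abs_integral_comp_mul_sub_le hinv hinv_le
            (Nat.cast_pos.2 hn) t)
          ((hc 1 ⟨zero_le_one, le_rfl⟩).symm.trans (hbc n).2)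
          ((hc₀ 1 ⟨zero_le_one, le_rfl⟩).symm.trans hbc0.2) hx
    _ = 3 * M * (2 * α⁻¹) * (α⁻¹ / β⁻¹ + 1) * (1 / n) := by ring
end
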